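/- For every m ≥ 1 and every set A ⊆ ℕ^m, A is definable (without parameters) by a first-order L_BA-formula in the standard L_BA-structure on ℕ if and only if the language [A]_k ⊆ ((Fin k)^m)^* of base-k expansions of elements of A is regular. -/

import Mathlib

open FirstOrder FirstOrder.Language

/-- Function symbols of the language of Büchi arithmetic: `0`, `S`, `V`, `+`. -/
inductive LBAFunc : ℕ → Type
  | zero : LBAFunc 0
  | succ : LBAFunc 1
  | vee : LBAFunc 1
  | add : LBAFunc 2

/-- Relation symbols of the language of Büchi arithmetic: `≤`. -/
inductive LBARel : ℕ → Type
  | le : LBARel 2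

/-- The language of Büchi arithmetic: `0`, `S`, `V`, `+`, `≤`. -/
def LBA : FirstOrder.Language := ⟨LBAFunc, LBARel⟩

/-- `V_k(x)`: the largest power of `k` dividing `x` (with `V_k(0) = 0`). -/
def Vk (k x : ℕ) : ℕ :=
  if x = 0 then 0 else k ^ Nat.findGreatest (fun n => k ^ n ∣ x) x

/-- The standard `L_BA`-structure on `ℕ`, with `V` interpreted as `V_k`. -/
def stdStructure (k : ℕ) : LBA.Structure ℕ where
  funMap {n} f := match f with
    | .zero => fun _ => 0
    | .succ => fun v => v 0 + 1
    | .vee => fun v => Vk k (v 0)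
    | .add => fun v => v 0 + v 1
  RelMap {n} r := match r with
    | .le => fun v => v 0 ≤ v 1

/-!
Call `S ⊆ ℕ^ι` recognizable when its language `[S]_k` of base-`k` expansions (least significant
digit first, trailing zeros allowed) is regular. Recognizable sets are closed under Boolean
operations, under substitution of variables (inverse images along letter maps) and under
projection: project the letters, then take the right quotient by the words of zeros, since the
projected-away coordinate may need more digits than the remaining ones. The graphs of `+` and
`V_k` are recognized by small automata reading all coordinates in parallel, so induction on terms
and formulas shows that definable sets are recognizable.

Conversely, a run of a DFA on the expansion of length `n` of `a` is coded by numbers `X s`, one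
per state `s`, whose digit at `k ^ i` is `1` iff the run is in state `s` after `i` letters.
With `V_k` one can say that `p` is a power of `k` and read off the digit of a number at `p`, so
"some `X` and `L = k ^ n` code an accepting run on `a`" is a first-order property of `a`.
-/

namespace Language

variable {α β : Type*}

theorem isRegular_top : (⊤ : Language α).IsRegular :=
  ⟨Unit, inferInstance, ⟨fun _ _ => (), (), Set.univ⟩,
    by ext; exact iff_of_true trivial trivial⟩

theorem IsRegular.preimage_map {L : Language β} (hL : L.IsRegular) (f : α → β) :
    IsRegular {w | w.map f ∈ L} := by
  obtain ⟨σ, _, M, rfl⟩ := hL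
  exact ⟨σ, inferInstance, M.comap f, M.accepts_comap f⟩

theorem IsRegular.image_map {L : Language α} (hL : L.IsRegular) (f : α → β) :
    IsRegular {w | ∃ u ∈ L, u.map f = w} := by
  classical
  obtain ⟨σ, _, M, hM⟩ := hL
  let N : NFA β σ := ⟨fun s b => {t | ∃ a, f a = b ∧ M.step s a = t}, {M.start}, M.accept⟩
  have mem_evalFrom : ∀ (w : List β) (s t : σ),
      t ∈ N.evalFrom {s} w ↔ ∃ u, u.map f = w ∧ M.evalFrom s u = t := by
    intro w
    induction w with
    | nil => simp [eq_comm]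
    | cons b w ih =>
      intro s t
      simp only [NFA.evalFrom_cons, NFA.stepSet_singleton,
        NFA.mem_evalFrom_iff_exists (S := N.step s b), ih]
      constructor
      · rintro ⟨_, ⟨a, rfl, rfl⟩, u, rfl, rfl⟩
        exact ⟨a :: u, rfl, rfl⟩
      · rintro ⟨_ | ⟨a, u⟩, hu, rfl⟩
        · simp at hu
        · obtain ⟨rfl, rfl⟩ := List.cons_eq_cons.1 hu
          exact ⟨_, ⟨a, rfl, rfl⟩, u, rfl, rfl⟩
  refine ⟨Set σ, inferInstance, N.toDFA, ?_⟩
  ext w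
  rw [NFA.toDFA_correct, NFA.mem_accepts]
  change (∃ t ∈ M.accept, t ∈ N.evalFrom {M.start} w) ↔ _
  simp only [mem_evalFrom, ← hM]
  exact ⟨fun ⟨t, ht, u, hu, hut⟩ => ⟨u, by rwa [DFA.mem_accepts, DFA.eval, hut], hu⟩,
    fun ⟨u, hu, huw⟩ => ⟨_, hu, u, huw, rfl⟩⟩

theorem IsRegular.exists_append {L : Language α} (hL : L.IsRegular) (K : Set (List α)) :
    IsRegular {w | ∃ u ∈ K, w ++ u ∈ L} := by
  obtain ⟨σ, _, M, rfl⟩ := hL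
  refine ⟨σ, inferInstance,
    ⟨M.step, M.start, {s | ∃ u ∈ K, M.evalFrom s u ∈ M.accept}⟩, ?_⟩
  ext w
  simp [DFA.mem_accepts, DFA.eval, DFA.evalFrom_of_append]
  rfl

end Language

namespace Buchi

variable {k : ℕ} {ι κ γ σ : Type*}

/-! ### Digits -/

def wordValue (k : ℕ) (w : List (ι → Fin k)) (j : ι) : ℕ :=
  Nat.ofDigits k (w.map fun a => (a j : ℕ))

@[simp]
theorem wordValue_nil : wordValue k ([] : List (ι → Fin k)) = 0 := rfl

@[simp]
theorem wordValue_cons (a : ι → Fin k) (w : List (ι → Fin k)) (j : ι) :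
    wordValue k (a :: w) j = a j + k * wordValue k w j := by
  simp [wordValue, Nat.ofDigits_cons]

theorem wordValue_map_comp (f : ι → κ) (w : List (κ → Fin k)) :
    wordValue k (w.map (· ∘ f)) = wordValue k w ∘ f := by
  funext j
  simp [wordValue, Function.comp_def]

theorem wordValue_lt (hk : 1 < k) (w : List (ι → Fin k)) (j : ι) :
    wordValue k w j < k ^ w.length := by
  have h := Nat.ofDigits_lt_base_pow_length hk (l := w.map fun a => (a j : ℕ)) fun d hd => by
    obtain ⟨a, -, rfl⟩ := List.mem_map.1 hd
    exact (a j).isLt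
  simpa [wordValue] using h

theorem wordValue_div_pow_mod (w : List (ι → Fin k)) (j : ι) {i : ℕ} (hi : i < w.length) :
    wordValue k w j / k ^ i % k = w[i] j := by
  induction w generalizing i with
  | nil => simp at hi
  | cons a w ih =>
    have hk : 0 < k := (a j).pos
    cases i with
    | zero => simp [Nat.add_mul_mod_self_left, Nat.mod_eq_of_lt (a j).isLt]
    | succ i =>
      rw [wordValue_cons, pow_succ', ← Nat.div_div_eq_div_mul, Nat.add_mul_div_left _ _ hk,
        Nat.div_eq_of_lt (a j).isLt, zero_add]
      exact ih (by simpa using hi)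

theorem sum_digit_mul_pow_eq_wordValue (w : List (ι → Fin k)) (j : ι) :
    ∑ i : Fin w.length, (w.get i j : ℕ) * k ^ (i : ℕ) = wordValue k w j := by
  induction w with
  | nil => simp
  | cons a w ih =>
    rw [wordValue_cons, ← ih, Finset.mul_sum]
    change ∑ i : Fin (w.length + 1), _ = _
    rw [Fin.sum_univ_succ]
    simp [pow_succ, mul_comm, mul_assoc]
    rfl

theorem exists_forall_lt_pow [Finite ι] (hk : 1 < k) (x : ι → ℕ) (m : ℕ) :
    ∃ n, m ≤ n ∧ ∀ j, x j < k ^ n := by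
  have := Fintype.ofFinite ι
  refine ⟨m + Finset.univ.sup x, by omega, fun j => ?_⟩
  calc x j ≤ Finset.univ.sup x := Finset.le_sup (Finset.mem_univ j)
    _ < k ^ Finset.univ.sup x := Nat.lt_pow_self hk
    _ ≤ k ^ (m + Finset.univ.sup x) := Nat.pow_le_pow_right (by omega) (by omega)

section expansion

variable [NeZero k]

def expansion (k : ℕ) [NeZero k] (n : ℕ) (x : ι → ℕ) : List (ι → Fin k) :=
  List.ofFn fun i : Fin n => fun j => Fin.ofNat k (x j / k ^ (i : ℕ))

@[simp]
theorem length_expansion (n : ℕ) (x : ι → ℕ) : (expansion k n x).length = n := by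
  simp [expansion]

@[simp]
theorem getElem_expansion (n : ℕ) (x : ι → ℕ) {i : ℕ} (hi : i < (expansion k n x).length) :
    (expansion k n x)[i] = fun j => Fin.ofNat k (x j / k ^ i) := by
  simp [expansion]

theorem map_comp_expansion (f : κ → ι) (n : ℕ) (x : ι → ℕ) :
    (expansion k n x).map (· ∘ f) = expansion k n (x ∘ f) := by
  simp [expansion, List.map_ofFn, Function.comp_def]

theorem wordValue_expansion (n : ℕ) (x : ι → ℕ) (j : ι) :
    wordValue k (expansion k n x) j = x j % k ^ n := by
  induction n generalizing x with
  | zero => simp [expansion, Nat.mod_one]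
  | succ n ih =>
    have h := ih fun j => x j / k
    simp only [expansion, Nat.div_div_eq_div_mul, ← pow_succ'] at h
    rw [expansion, List.ofFn_succ, wordValue_cons]
    simp only [Fin.val_succ, Fin.val_zero, pow_zero, Nat.div_one, Fin.val_ofNat]
    rw [h, pow_succ', Nat.mod_mul]

theorem wordValue_expansion_of_lt {n : ℕ} {x : ι → ℕ} (hx : ∀ j, x j < k ^ n) :
    wordValue k (expansion k n x) = x :=
  funext fun j => (wordValue_expansion n x j).trans (Nat.mod_eq_of_lt (hx j))

theorem expansion_wordValue (w : List (ι → Fin k)) :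
    expansion k w.length (wordValue k w) = w := by
  refine List.ext_getElem (by simp) fun i h₁ h₂ => ?_
  funext j
  ext
  simp [wordValue_div_pow_mod w j h₂]

end expansion

theorem add_mul_eq_add_mul_iff (hk : 0 < k) {t y d z : ℕ} (hd : d < k) :
    t + k * y = d + k * z ↔ t % k = d ∧ t / k + y = z := by
  constructor
  · intro h
    obtain ⟨hdiv, hmod⟩ := (Nat.div_mod_unique hk).2 ⟨h.symm, hd⟩
    rw [Nat.add_mul_div_left _ _ hk] at hdiv
    rw [Nat.add_mul_mod_self_left] at hmod
    exact ⟨hmod, hdiv⟩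
  · rintro ⟨rfl, rfl⟩
    rw [mul_add, ← add_assoc, Nat.mod_add_div]

theorem Vk_eq_pow_padicValNat (hk : 1 < k) {x : ℕ} (hx : x ≠ 0) :
    Vk k x = k ^ padicValNat k x := by
  rw [Vk, if_neg hx, Nat.findGreatest_eq_iff.2]
  refine ⟨Nat.padicValNat_le_self x, fun _ => pow_padicValNat_dvd, fun n hn _ hdvd => ?_⟩
  exact (Nat.pow_dvd_iff_le_padicValNat hk.ne' hx).1 hdvd |>.not_gt hn

theorem Vk_mul_self (hk : 1 < k) (x : ℕ) : Vk k (k * x) = k * Vk k x := by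
  rcases eq_or_ne x 0 with rfl | hx
  · simp [Vk]
  rw [Vk_eq_pow_padicValNat hk hx, Vk_eq_pow_padicValNat hk (by positivity),
    padicValNat_base_mul hk hx, pow_succ']

theorem Vk_of_not_dvd (hk : 1 < k) {x : ℕ} (hx : ¬k ∣ x) : Vk k x = 1 := by
  rw [Vk_eq_pow_padicValNat hk (by rintro rfl; exact hx (dvd_zero k)),
    padicValNat.eq_zero_of_not_dvd hx, pow_zero]

/-- The base-`k` digit of `x` at place value `p` is `d`; meant for `p` a power of `k`, when
`b = 0 ∨ k * p ≤ Vk k b` says that `k * p` divides `b`. -/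
def IsDigitAt (k x p d : ℕ) : Prop :=
  ∃ b c, x = b + d * p + c ∧ c < p ∧ (b = 0 ∨ k * p ≤ Vk k b)

theorem pow_dvd_iff_eq_zero_or_le_Vk (hk : 1 < k) {b e : ℕ} :
    k ^ e ∣ b ↔ b = 0 ∨ k ^ e ≤ Vk k b := by
  rcases eq_or_ne b 0 with rfl | hb
  · simp
  rw [Vk_eq_pow_padicValNat hk hb, Nat.pow_le_pow_iff_right hk,
    Nat.pow_dvd_iff_le_padicValNat hk.ne' hb]
  simp [hb]

theorem isDigitAt_pow_iff (hk : 1 < k) {x e d : ℕ} (hd : d < k) :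
    IsDigitAt k x (k ^ e) d ↔ x / k ^ e % k = d := by
  have hpos : 0 < k ^ e := by positivity
  constructor
  · rintro ⟨b, c, rfl, hc, hb⟩
    rw [← pow_succ', ← pow_dvd_iff_eq_zero_or_le_Vk hk] at hb
    obtain ⟨q, rfl⟩ := hb
    rw [show k ^ (e + 1) * q + d * k ^ e + c = c + k ^ e * (d + k * q) by ring,
      Nat.add_mul_div_left _ _ hpos, Nat.div_eq_of_lt hc, zero_add, Nat.add_mul_mod_self_left,
      Nat.mod_eq_of_lt hd]
  · intro h
    refine ⟨x / k ^ (e + 1) * k ^ (e + 1), x % k ^ e, ?_, Nat.mod_lt _ hpos, ?_⟩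
    · have h1 := Nat.div_add_mod x (k ^ (e + 1))
      have h2 : x % k ^ (e + 1) = x % k ^ e + k ^ e * d := h ▸ Nat.mod_pow_succ
      linarith
    · rw [← pow_succ', ← pow_dvd_iff_eq_zero_or_le_Vk hk]
      exact dvd_mul_left _ _

theorem ne_zero_and_Vk_eq_self_iff (hk : 1 < k) {p : ℕ} :
    p ≠ 0 ∧ Vk k p = p ↔ ∃ e, p = k ^ e := by
  constructor
  · rintro ⟨hp, hV⟩
    exact ⟨_, hV.symm.trans (Vk_eq_pow_padicValNat hk hp)⟩
  · rintro ⟨e, rfl⟩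
    rw [Vk_eq_pow_padicValNat hk (by positivity), padicValNat_base_pow hk]
    exact ⟨by positivity, rfl⟩

/-! ### Recognizable sets -/

/-- The language `[S]_k`. -/
def expansions (k : ℕ) (S : Set (ι → ℕ)) : Language (ι → Fin k) :=
  {w | wordValue k w ∈ S}

@[simp]
theorem mem_expansions {S : Set (ι → ℕ)} {w : List (ι → Fin k)} :
    w ∈ expansions k S ↔ wordValue k w ∈ S :=
  Iff.rfl

def Recognizable (k : ℕ) (S : Set (ι → ℕ)) : Prop :=
  (expansions k S).IsRegular

namespace Recognizable

theorem univ : Recognizable k (Set.univ : Set (ι → ℕ)) :=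
  Language.isRegular_top

theorem compl {S : Set (ι → ℕ)} (hS : Recognizable k S) : Recognizable k Sᶜ :=
  Language.IsRegular.compl hS

theorem inter {S T : Set (ι → ℕ)} (hS : Recognizable k S) (hT : Recognizable k T) :
    Recognizable k (S ∩ T) :=
  Language.IsRegular.inf hS hT

theorem union {S T : Set (ι → ℕ)} (hS : Recognizable k S) (hT : Recognizable k T) :
    Recognizable k (S ∪ T) :=
  Language.IsRegular.add hS hT

theorem empty : Recognizable k (∅ : Set (ι → ℕ)) := by
  simpa using (univ (k := k) (ι := ι)).compl

theorem iInter [Finite κ] {S : κ → Set (ι → ℕ)} (hS : ∀ i, Recognizable k (S i)) :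
    Recognizable k (⋂ i, S i) := by
  classical
  have := Fintype.ofFinite κ
  suffices ∀ s : Finset κ, Recognizable k (⋂ i ∈ s, S i) by simpa using this Finset.univ
  intro s
  induction s using Finset.induction_on with
  | empty => simpa using univ
  | insert i s _ ih => simpa [Finset.set_biInter_insert] using (hS i).inter ih

theorem preimage_comp {S : Set (κ → ℕ)} (hS : Recognizable k S) (f : κ → ι) :
    Recognizable k {x | x ∘ f ∈ S} := by
  have h := Language.IsRegular.preimage_map hS (· ∘ f)
  simp only [mem_expansions, wordValue_map_comp] at h
  exact h

end Recognizable

theorem wordValue_append_replicate_zero [NeZero k] (w : List (ι → Fin k)) (n : ℕ) :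
    wordValue k (w ++ List.replicate n 0) = wordValue k w := by
  funext j
  simp [wordValue, List.map_replicate]

theorem expansions_exists [Finite γ] [NeZero k] (hk : 1 < k) (S : Set (ι ⊕ γ → ℕ)) :
    expansions k {x | ∃ y, Sum.elim x y ∈ S} =
      {w | ∃ u ∈ Set.range (List.replicate · 0), w ++ u ∈
        {w | ∃ u ∈ expansions k S, u.map (· ∘ Sum.inl) = w}} := by
  ext w
  constructor
  · rintro ⟨y, hy⟩
    obtain ⟨N, hwN, hy_lt⟩ := exists_forall_lt_pow hk y w.length
    have hw_lt : ∀ j, wordValue k w j < k ^ N := fun j =>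
      (wordValue_lt hk w j).trans_le (Nat.pow_le_pow_right (by omega) hwN)
    have hpad : expansion k N (wordValue k w) = w ++ List.replicate (N - w.length) 0 := by
      have h := expansion_wordValue (w ++ List.replicate (N - w.length) 0)
      rwa [wordValue_append_replicate_zero, List.length_append, List.length_replicate,
        Nat.add_sub_cancel' (by omega)] at h
    refine ⟨_, ⟨N - w.length, rfl⟩, expansion k N (Sum.elim (wordValue k w) y), ?_, ?_⟩
    · rwa [mem_expansions, wordValue_expansion_of_lt (by simp [hw_lt, hy_lt])]
    · rw [map_comp_expansion, Sum.elim_comp_inl, hpad]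
  · rintro ⟨_, ⟨n, rfl⟩, u, hu, hmap⟩
    refine ⟨wordValue k u ∘ Sum.inr, ?_⟩
    have hinl : wordValue k w = wordValue k u ∘ Sum.inl := by
      rw [← wordValue_map_comp, hmap, wordValue_append_replicate_zero]
    rwa [hinl, Sum.elim_comp_inl_inr]

theorem Recognizable.exists [Finite γ] [NeZero k] (hk : 1 < k) {S : Set (ι ⊕ γ → ℕ)}
    (hS : Recognizable k S) : Recognizable k {x | ∃ y, Sum.elim x y ∈ S} := by
  rw [Recognizable, expansions_exists hk]
  exact (Language.IsRegular.image_map hS _).exists_append _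

/-! ### Automata for addition and `V_k` -/

theorem recognizable_of_invariant {σ : Type} [Fintype σ] (M : DFA (ι → Fin k) σ)
    (P : σ → (ι → ℕ) → Prop) (accept_iff : ∀ s, s ∈ M.accept ↔ P s 0)
    (step_iff : ∀ s a x, P (M.step s a) x ↔ P s fun j => a j + k * x j) :
    Recognizable k {x | P M.start x} := by
  have key : ∀ w s, M.evalFrom s w ∈ M.accept ↔ P s (wordValue k w) := by
    intro w
    induction w with
    | nil => exact accept_iff
    | cons a w ih =>
      intro s
      rw [DFA.evalFrom_cons, ih, step_iff]
      simp only [← wordValue_cons]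
  exact ⟨σ, inferInstance, M, Set.ext fun w => key w M.start⟩

/-- Schoolbook addition with carry, started with carry `c`; `none` is the rejecting sink. -/
def addDFA (k : ℕ) (c : Fin 2) : DFA (Fin 3 → Fin k) (Option (Fin 2)) where
  step
    | some c, a =>
      if (a 0 + a 1 + c : ℕ) % k = a 2 then
        some ⟨(a 0 + a 1 + c) / k, (Nat.div_lt_iff_lt_mul (a 0).pos).2 (by omega)⟩
      else none
    | none, _ => none
  start := some c
  accept := {some 0}

theorem recognizable_add (c : Fin 2) :
    Recognizable k {x : Fin 3 → ℕ | x 0 + x 1 + c = x 2} := by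
  refine recognizable_of_invariant (addDFA k c)
    (fun s x => s.elim False fun c => x 0 + x 1 + c = x 2) ?_ ?_
  · rintro (_ | c)
    · simp [addDFA]
    · show some c = some 0 ↔ 0 + 0 + (c : ℕ) = 0
      rw [Option.some_inj, Fin.ext_iff]
      simp
  · rintro (_ | c) a x
    · exact Iff.rfl
    · have key := add_mul_eq_add_mul_iff (a 0).pos (t := a 0 + a 1 + c) (y := x 0 + x 1)
        (a 2).isLt (z := x 2)
      have e : (a 0 + k * x 0 : ℕ) + (a 1 + k * x 1) + c = (a 0 + a 1 + c) + k * (x 0 + x 1) := by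
        ring
      simp only [addDFA, Option.elim, e]
      split_ifs with h
      · simp only [h, true_and, key]
        omega
      · simp [h, key]

/-- Reads `x 0` and `x 1` in parallel: in state `some false` no nonzero digit of `x 0` has been
read yet, in state `some true` the digit `1` of `x 1` has been read and only zeros may follow. -/
def vkDFA (k : ℕ) : DFA (Fin 2 → Fin k) (Option Bool) where
  step
    | some false, a =>
      if (a 0 : ℕ) = 0 then (if (a 1 : ℕ) = 0 then some false else none)
      else if (a 1 : ℕ) = 1 then some true else none
    | some true, a => if (a 1 : ℕ) = 0 then some true else none
    | none, _ => none
  start := some false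
  accept := {s | s.isSome}

theorem recognizable_Vk (hk : 1 < k) : Recognizable k {x : Fin 2 → ℕ | Vk k (x 0) = x 1} := by
  have hk0 : 0 < k := by omega
  refine recognizable_of_invariant (vkDFA k)
    (fun s x => match s with
      | some false => Vk k (x 0) = x 1
      | some true => x 1 = 0
      | none => False) ?_ ?_
  · rintro (_ | _ | _) <;> simp [vkDFA, Vk]
  · rintro (_ | _ | _) a x
    · exact Iff.rfl
    · by_cases h0 : (a 0 : ℕ) = 0
      · have key := add_mul_eq_add_mul_iff hk0 (t := 0) (y := Vk k (x 0)) (a 1).isLt (z := x 1)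
        simp only [Nat.zero_mod, Nat.zero_div, zero_add] at key
        simp only [vkDFA, h0, zero_add, Vk_mul_self hk, key, if_true]
        split_ifs <;> grind
      · have key := add_mul_eq_add_mul_iff hk0 (t := 1) (y := 0) (a 1).isLt (z := x 1)
        have hndvd : ¬k ∣ a 0 + k * x 0 := by
          rw [Nat.dvd_iff_mod_eq_zero, Nat.add_mul_mod_self_left, Nat.mod_eq_of_lt (a 0).isLt]
          exact h0
        simp only [Nat.mod_eq_of_lt hk, Nat.div_eq_of_lt hk, mul_zero, add_zero] at key
        simp only [vkDFA, h0, Vk_of_not_dvd hk hndvd, key, if_false]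
        split_ifs <;> grind
    · simp only [vkDFA, Nat.add_eq_zero_iff, mul_eq_zero, hk0.ne', false_or]
      split_ifs with h1 <;> simp [h1]

/-! ### Definable sets are recognizable -/

theorem recognizable_le [NeZero k] (hk : 1 < k) :
    Recognizable k {x : Fin 2 → ℕ | x 0 ≤ x 1} := by
  have h := ((recognizable_add (k := k) 0).preimage_comp
    (![.inl 0, .inr (), .inl 1] : Fin 3 → Fin 2 ⊕ Unit)).exists hk
  convert h using 2
  ext x
  simp only [Set.mem_ofPred_eq, Function.comp_apply]
  exact ⟨fun h => ⟨fun _ => x 1 - x 0, by simp; omega⟩,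
    fun ⟨y, hy⟩ => by simp at hy; omega⟩

theorem recognizable_eq [NeZero k] (hk : 1 < k) :
    Recognizable k {x : Fin 2 → ℕ | x 0 = x 1} := by
  convert (recognizable_le hk).inter ((recognizable_le hk).preimage_comp ![1, 0]) using 2
  ext x
  simp [le_antisymm_iff]

def termGraph (k : ℕ) (t : LBA.Term ι) : Set (ι ⊕ Unit → ℕ) :=
  {w | (letI := stdStructure k; t.realize (w ∘ Sum.inl)) = w (Sum.inr ())}

theorem Recognizable.preimage_realize [Finite κ] [NeZero k] (hk : 1 < k) {ts : κ → LBA.Term ι}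
    (hts : ∀ b, Recognizable k (termGraph k (ts b))) {S : Set (κ → ℕ)}
    (hS : Recognizable k S) :
    Recognizable k {v | (fun b => letI := stdStructure k; (ts b).realize v) ∈ S} := by
  have h := ((Recognizable.iInter fun b => (hts b).preimage_comp (Sum.map id fun _ => b)).inter
    (hS.preimage_comp Sum.inr)).exists hk
  convert h using 2
  ext v
  simp [termGraph, Sum.elim_comp_map, ← funext_iff]

theorem recognizable_termGraph_var [NeZero k] (hk : 1 < k) (a : ι) :
    Recognizable k (termGraph k (Term.var a)) :=
  (recognizable_eq hk).preimage_comp ![Sum.inl a, Sum.inr ()]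

theorem recognizable_termGraph_func_var [NeZero k] (hk : 1 < k) {l : ℕ} (f : LBAFunc l) :
    Recognizable k (termGraph k (Term.func (L := LBA) f Term.var)) := by
  cases f with
  | zero =>
    convert (recognizable_add (k := k) 0).preimage_comp fun _ => (Sum.inr () : Fin 0 ⊕ Unit)
      using 2
    ext x
    simp only [termGraph, Set.mem_ofPred_eq, Function.comp_apply]
    change 0 = _ ↔ _
    simp [eq_comm]
  | succ =>
    have h := (((recognizable_add (k := k) 0).preimage_comp
      fun _ => (Sum.inr () : (Fin 1 ⊕ Unit) ⊕ Unit)).inter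
      ((recognizable_add 1).preimage_comp (![.inl (.inl 0), .inr (), .inl (.inr ())] :
        Fin 3 → (Fin 1 ⊕ Unit) ⊕ Unit))).exists hk
    convert h using 2
    ext x
    change x (.inl 0) + 1 = x (.inr ()) ↔ _
    simp only [Set.mem_ofPred_eq, Set.mem_inter_iff, Function.comp_apply]
    exact ⟨fun h => ⟨fun _ => 0, by simpa using h⟩, fun ⟨y, hy0, hy⟩ => by simp_all⟩
  | vee => exact (recognizable_Vk hk).preimage_comp ![Sum.inl 0, Sum.inr ()]
  | add => exact (recognizable_add 0).preimage_comp ![Sum.inl 0, Sum.inl 1, Sum.inr ()]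

theorem recognizable_termGraph [NeZero k] (hk : 1 < k) (t : LBA.Term ι) :
    Recognizable k (termGraph k t) := by
  induction t with
  | var a => exact recognizable_termGraph_var hk a
  | @func l f ts ih =>
    let us : Fin l ⊕ Unit → LBA.Term (ι ⊕ Unit) :=
      Sum.elim (fun i => (ts i).relabel Sum.inl) fun _ => Term.var (Sum.inr ())
    have hus : ∀ b, Recognizable k (termGraph k (us b)) := by
      rintro (i | ⟨⟩)
      · convert (ih i).preimage_comp (Sum.map Sum.inl id) using 2
        ext w
        simp only [termGraph, us, Set.mem_ofPred_eq, Sum.elim_inl, Term.realize_relabel]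
        rfl
      · exact recognizable_termGraph_var hk _
    convert (recognizable_termGraph_func_var hk f).preimage_realize hk hus using 2
    ext w
    simp [termGraph, us, Term.realize_relabel]

theorem recognizable_realize_boundedFormula [NeZero k] (hk : 1 < k) {n : ℕ}
    (φ : LBA.BoundedFormula ι n) :
    Recognizable k {v : ι ⊕ Fin n → ℕ |
      letI := stdStructure k; φ.Realize (v ∘ Sum.inl) (v ∘ Sum.inr)} := by
  induction φ with
  | falsum => exact Recognizable.empty
  | equal t₁ t₂ =>
    convert (recognizable_eq hk).preimage_realize hk (ts := ![t₁, t₂])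
      (fun _ => recognizable_termGraph hk _) using 2
    ext v
    simp [BoundedFormula.Realize]
  | rel R ts =>
    cases R
    convert (recognizable_le hk).preimage_realize hk (ts := ts)
      (fun _ => recognizable_termGraph hk _) using 2
    ext v
    simp only [Set.mem_ofPred_eq, BoundedFormula.Realize, Sum.elim_comp_inl_inr]
    exact Iff.rfl
  | imp φ ψ ihφ ihψ =>
    convert ihφ.compl.union ihψ using 2
    ext v
    simp [imp_iff_not_or]
  | @all n φ ih =>
    let e : ι ⊕ Fin (n + 1) → (ι ⊕ Fin n) ⊕ Unit :=
      Sum.elim (fun a => .inl (.inl a)) (Fin.snoc (fun i => .inl (.inr i)) (.inr ()))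
    convert ((ih.preimage_comp e).compl.exists hk).compl using 2
    ext v
    have hinl : ∀ y : Unit → ℕ, (Sum.elim v y ∘ e) ∘ Sum.inl = v ∘ Sum.inl :=
      fun _ => rfl
    have hinr : ∀ y : Unit → ℕ,
        (Sum.elim v y ∘ e) ∘ Sum.inr = Fin.snoc (v ∘ Sum.inr) (y ()) := fun y =>
      Fin.comp_snoc (Sum.elim v y) (fun i => Sum.inl (Sum.inr i)) (Sum.inr ())
    simp only [Set.mem_compl_iff, Set.mem_ofPred_eq, not_exists, not_not,
      BoundedFormula.realize_all, hinl, hinr]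
    exact ⟨fun h y => h (y ()), fun h a => h fun _ => a⟩

/-! ### Recognizable sets are definable -/

def Definable (k : ℕ) (P : (ι → ℕ) → Prop) : Prop :=
  ∃ φ : LBA.Formula ι, ∀ v, P v ↔ (letI := stdStructure k; φ.Realize v)

def TermDefinable (k : ℕ) (F : (ι → ℕ) → ℕ) : Prop :=
  ∃ t : LBA.Term ι, ∀ v, (letI := stdStructure k; t.realize v) = F v

namespace TermDefinable

theorem var (i : ι) : TermDefinable k fun v => v i :=
  ⟨Term.var i, fun _ => rfl⟩

theorem zero : TermDefinable k fun _ : ι → ℕ => 0 :=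
  ⟨Term.func (LBAFunc.zero : LBA.Functions 0) ![], fun _ => rfl⟩

theorem succ {F : (ι → ℕ) → ℕ} (hF : TermDefinable k F) :
    TermDefinable k fun v => F v + 1 := by
  obtain ⟨t, ht⟩ := hF
  exact ⟨Term.func (LBAFunc.succ : LBA.Functions 1) ![t], fun v => by
    beta_reduce; rw [← ht]; rfl⟩

theorem vk {F : (ι → ℕ) → ℕ} (hF : TermDefinable k F) :
    TermDefinable k fun v => Vk k (F v) := by
  obtain ⟨t, ht⟩ := hF
  exact ⟨Term.func (LBAFunc.vee : LBA.Functions 1) ![t], fun v => by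
    beta_reduce; rw [← ht]; rfl⟩

theorem add {F G : (ι → ℕ) → ℕ} (hF : TermDefinable k F) (hG : TermDefinable k G) :
    TermDefinable k fun v => F v + G v := by
  obtain ⟨t, ht⟩ := hF
  obtain ⟨u, hu⟩ := hG
  exact ⟨Term.func (LBAFunc.add : LBA.Functions 2) ![t, u], fun v => by
    beta_reduce; rw [← ht, ← hu]; rfl⟩

theorem comp {F : (ι → ℕ) → ℕ} (hF : TermDefinable k F) (f : ι → κ) :
    TermDefinable k fun w : κ → ℕ => F fun i => w (f i) := by
  obtain ⟨t, ht⟩ := hF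
  exact ⟨t.relabel f, fun w => by simp [Term.realize_relabel, ← ht, Function.comp_def]⟩

theorem const_mul (c : ℕ) {F : (ι → ℕ) → ℕ} (hF : TermDefinable k F) :
    TermDefinable k fun v => c * F v := by
  induction c with
  | zero => simpa using zero
  | succ c ih => simpa [add_mul] using ih.add hF

end TermDefinable

namespace Definable

theorem of_iff {P Q : (ι → ℕ) → Prop} (hP : Definable k P) (h : ∀ v, Q v ↔ P v) :
    Definable k Q := by
  obtain ⟨φ, hφ⟩ := hP
  exact ⟨φ, fun v => (h v).trans (hφ v)⟩

theorem const (p : Prop) : Definable k fun _ : ι → ℕ => p := by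
  by_cases hp : p
  · exact ⟨⊤, fun _ => by simp [hp]⟩
  · exact ⟨⊥, fun _ => by simp [hp]⟩

theorem eq {F G : (ι → ℕ) → ℕ} (hF : TermDefinable k F) (hG : TermDefinable k G) :
    Definable k fun v => F v = G v := by
  obtain ⟨t, ht⟩ := hF
  obtain ⟨u, hu⟩ := hG
  exact ⟨t.equal u, fun v => by simp [ht, hu]⟩

theorem le {F G : (ι → ℕ) → ℕ} (hF : TermDefinable k F) (hG : TermDefinable k G) :
    Definable k fun v => F v ≤ G v := by
  obtain ⟨t, ht⟩ := hF
  obtain ⟨u, hu⟩ := hG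
  let _ := stdStructure k
  refine ⟨Relations.formula₂ (LBARel.le : LBA.Relations 2) t u, fun v => ?_⟩
  refine Iff.trans ?_ Formula.realize_rel₂.symm
  beta_reduce
  rw [← ht, ← hu]
  rfl

theorem lt {F G : (ι → ℕ) → ℕ} (hF : TermDefinable k F) (hG : TermDefinable k G) :
    Definable k fun v => F v < G v :=
  le hF.succ hG

theorem and {P Q : (ι → ℕ) → Prop} (hP : Definable k P) (hQ : Definable k Q) :
    Definable k fun v => P v ∧ Q v := by
  obtain ⟨φ, hφ⟩ := hP
  obtain ⟨ψ, hψ⟩ := hQ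
  exact ⟨φ ⊓ ψ, fun v => by simp [hφ, hψ]⟩

theorem or {P Q : (ι → ℕ) → Prop} (hP : Definable k P) (hQ : Definable k Q) :
    Definable k fun v => P v ∨ Q v := by
  obtain ⟨φ, hφ⟩ := hP
  obtain ⟨ψ, hψ⟩ := hQ
  exact ⟨φ ⊔ ψ, fun v => by simp [hφ, hψ]⟩

theorem imp {P Q : (ι → ℕ) → Prop} (hP : Definable k P) (hQ : Definable k Q) :
    Definable k fun v => P v → Q v := by
  obtain ⟨φ, hφ⟩ := hP
  obtain ⟨ψ, hψ⟩ := hQ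
  exact ⟨φ.imp ψ, fun v => by simp [hφ, hψ]⟩

theorem forall_finite [Finite γ] {P : γ → (ι → ℕ) → Prop}
    (hP : ∀ g, Definable k (P g)) : Definable k fun v => ∀ g, P g v := by
  choose φ hφ using hP
  exact ⟨Formula.iInf φ, fun v => by simp [hφ]⟩

theorem exists_fun [Finite γ] {P : (ι → ℕ) → (γ → ℕ) → Prop}
    (hP : Definable k fun w : ι ⊕ γ → ℕ => P (fun i => w (.inl i)) fun g => w (.inr g)) :
    Definable k fun v => ∃ y, P v y := by
  obtain ⟨φ, hφ⟩ := hP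
  exact ⟨φ.iExs γ, fun v => by simp [← hφ]⟩

theorem exists_nat {P : (ι → ℕ) → ℕ → Prop}
    (hP : Definable k fun w : ι ⊕ Unit → ℕ => P (fun i => w (.inl i)) (w (.inr ()))) :
    Definable k fun v => ∃ y, P v y :=
  (exists_fun (P := fun v y => P v (y ())) hP).of_iff fun _ =>
    ⟨fun ⟨y, hy⟩ => ⟨fun _ => y, hy⟩, fun ⟨_, hy⟩ => ⟨_, hy⟩⟩

theorem forall_nat {P : (ι → ℕ) → ℕ → Prop}
    (hP : Definable k fun w : ι ⊕ Unit → ℕ => P (fun i => w (.inl i)) (w (.inr ()))) :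
    Definable k fun v => ∀ y, P v y := by
  obtain ⟨φ, hφ⟩ := hP
  refine ⟨φ.iAlls Unit, fun v => ?_⟩
  simp only [Formula.realize_iAlls, ← hφ, Sum.elim_inl, Sum.elim_inr]
  exact ⟨fun h y => h (y ()), fun h y => h fun _ => y⟩

end Definable

theorem Definable.isDigitAt {F G : (ι → ℕ) → ℕ} (hF : TermDefinable k F)
    (hG : TermDefinable k G) (d : ℕ) : Definable k fun v => IsDigitAt k (F v) (G v) d := by
  refine .exists_nat (.exists_nat (.and (.eq (hF.comp _) ?_) (.and (.lt (.var _) (hG.comp _)) ?_)))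
  · exact .add (.add (.var _) (.const_mul d (hG.comp _))) (.var _)
  · exact .or (.eq (.var _) .zero) (.le (.const_mul k (hG.comp _)) (.vk (.var _)))

theorem Definable.ne_zero_and_Vk_eq_self {F : (ι → ℕ) → ℕ} (hF : TermDefinable k F) :
    Definable k fun v => F v ≠ 0 ∧ Vk k (F v) = F v :=
  .and (.imp (.eq hF .zero) (.const False)) (.eq hF.vk hF)

/-- `X` and `L = k ^ n` code an accepting run of `M` on the expansion of length `n` of `a`: the
digit of `X s` at `k ^ i` is `1` if the run is in state `s` after `i` letters. Other digits are
unconstrained; this suffices because every state marked at `L` must be accepting. -/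
def IsAcceptingRunCode (M : DFA (ι → Fin k) σ) (a : ι → ℕ) (X : σ → ℕ) (L : ℕ) :
    Prop :=
  (L ≠ 0 ∧ Vk k L = L) ∧ (∀ j, a j < L) ∧ IsDigitAt k (X M.start) 1 1 ∧
    (∀ p, p ≠ 0 ∧ Vk k p = p → k * p ≤ L → ∀ s ℓ, IsDigitAt k (X s) p 1 →
      (∀ j, IsDigitAt k (a j) p (ℓ j)) → IsDigitAt k (X (M.step s ℓ)) (k * p) 1) ∧
    ∀ s, IsDigitAt k (X s) L 1 → s ∈ M.accept

theorem definable_isAcceptingRunCode [Finite ι] [Finite σ] (M : DFA (ι → Fin k) σ) :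
    Definable k fun w : (ι ⊕ σ) ⊕ Unit → ℕ =>
      IsAcceptingRunCode M (fun j => w (.inl (.inl j))) (fun s => w (.inl (.inr s)))
        (w (.inr ())) := by
  refine .and (.ne_zero_and_Vk_eq_self (.var _)) (.and ?_ (.and ?_ (.and ?_ ?_)))
  · exact .forall_finite fun _ => .lt (.var _) (.var _)
  · exact .isDigitAt (.var _) (.succ .zero) 1
  · exact .forall_nat <| .imp (.ne_zero_and_Vk_eq_self (.var _)) <|
      .imp (.le (.const_mul k (.var _)) (.var _)) <|
      .forall_finite fun _ => .forall_finite fun _ => .imp (.isDigitAt (.var _) (.var _) 1) <|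
      .imp (.forall_finite fun _ => .isDigitAt (.var _) (.var _) _) <|
      .isDigitAt (.var _) (.const_mul k (.var _)) 1
  · exact .forall_finite fun _ => .imp (.isDigitAt (.var _) (.var _) 1) (.const _)

theorem accepts_of_isAcceptingRunCode [NeZero k] (hk : 1 < k) {M : DFA (ι → Fin k) σ}
    {a : ι → ℕ} {X : σ → ℕ} {L : ℕ} (h : IsAcceptingRunCode M a X L) :
    ∃ n, (∀ j, a j < k ^ n) ∧ expansion k n a ∈ M.accepts := by
  obtain ⟨hL, ha, hstart, hstep, hacc⟩ := h
  obtain ⟨n, rfl⟩ := (ne_zero_and_Vk_eq_self_iff hk).1 hL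
  set w := expansion k n a
  have hrun : ∀ i ≤ n, IsDigitAt k (X (M.evalFrom M.start (w.take i))) (k ^ i) 1 := by
    intro i
    induction i with
    | zero => exact fun _ => by simpa using hstart
    | succ i ih =>
      intro hi
      have hi' : i < w.length := by simp [w]; omega
      rw [← List.take_concat_get' w i hi', DFA.evalFrom_append_singleton, pow_succ']
      refine hstep _ ((ne_zero_and_Vk_eq_self_iff hk).2 ⟨i, rfl⟩) ?_ _ _ (ih (by omega))
        fun j => ?_
      · rw [← pow_succ']
        exact Nat.pow_le_pow_right (by omega) hi
      · rw [isDigitAt_pow_iff hk (w[i] j).isLt]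
        simp [w]
  refine ⟨n, ha, hacc _ ?_⟩
  simpa [List.take_of_length_le, w] using hrun n le_rfl

theorem exists_isAcceptingRunCode [NeZero k] (hk : 1 < k) {M : DFA (ι → Fin k) σ}
    {a : ι → ℕ} {n : ℕ} (ha : ∀ j, a j < k ^ n) (hacc : expansion k n a ∈ M.accepts) :
    ∃ X, IsAcceptingRunCode M a X (k ^ n) := by
  classical
  set w := expansion k n a
  let r : ℕ → σ := fun i => M.evalFrom M.start (w.take i)
  let code : List (σ → Fin k) :=
    List.ofFn fun i : Fin (n + 1) => fun s => if r i = s then 1 else 0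
  have hcode : ∀ i ≤ n, ∀ s, IsDigitAt k (wordValue k code s) (k ^ i) 1 ↔ r i = s := by
    intro i hi s
    rw [isDigitAt_pow_iff hk hk, wordValue_div_pow_mod code s (by simp [code]; omega)]
    simp only [code, List.getElem_ofFn]
    split_ifs with h <;> simp [h, Nat.mod_eq_of_lt hk]
  refine ⟨fun s => wordValue k code s, (ne_zero_and_Vk_eq_self_iff hk).2 ⟨n, rfl⟩, ha,
    by simpa using (hcode 0 n.zero_le M.start).2 rfl, ?_, fun s hs => ?_⟩
  · intro p hp hpL s ℓ hs hℓ
    obtain ⟨e, rfl⟩ := (ne_zero_and_Vk_eq_self_iff hk).1 hp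
    have he : e + 1 ≤ n := by
      rwa [← pow_succ', Nat.pow_le_pow_iff_right hk] at hpL
    have hwe : w[e]'(by simp [w]; omega) = ℓ := by
      funext j
      ext
      simpa [w, isDigitAt_pow_iff hk (ℓ j).isLt] using hℓ j
    rw [← pow_succ', hcode (e + 1) he, ← (hcode e (by omega) s).1 hs]
    simp only [r, ← List.take_concat_get' w e (by simp [w]; omega),
      DFA.evalFrom_append_singleton, hwe]
  · rw [← (hcode n le_rfl s).1 hs]
    simpa [r, List.take_of_length_le, w, DFA.mem_accepts, DFA.eval] using hacc

theorem recognizable_of_definable [NeZero k] (hk : 1 < k) {A : Set (ι → ℕ)}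
    (hA : Definable k (· ∈ A)) : Recognizable k A := by
  obtain ⟨φ, hφ⟩ := hA
  convert (recognizable_realize_boundedFormula hk φ).preimage_comp
    (Sum.elim id finZeroElim : ι ⊕ Fin 0 → ι) using 2
  ext v
  simp only [Set.mem_ofPred_eq, hφ, Formula.Realize]
  exact iff_of_eq (congrArg _ (Subsingleton.elim _ _))

theorem definable_of_recognizable [Finite ι] [NeZero k] (hk : 1 < k) {A : Set (ι → ℕ)}
    (hA : Recognizable k A) : Definable k (· ∈ A) := by
  obtain ⟨σ, _, M, hM⟩ := hA
  refine (Definable.exists_fun (P := fun a X => ∃ L, IsAcceptingRunCode M a X L)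
    (.exists_nat (definable_isAcceptingRunCode M))).of_iff fun a => ?_
  constructor
  · intro ha
    obtain ⟨n, -, hn⟩ := exists_forall_lt_pow hk a 0
    obtain ⟨X, hX⟩ := exists_isAcceptingRunCode hk hn
      (by rwa [hM, mem_expansions, wordValue_expansion_of_lt hn])
    exact ⟨X, _, hX⟩
  · rintro ⟨X, L, h⟩
    obtain ⟨n, hn, hacc⟩ := accepts_of_isAcceptingRunCode hk h
    rwa [hM, mem_expansions, wordValue_expansion_of_lt hn] at hacc

theorem definable_iff_recognizable [Finite ι] (hk : 1 < k) (A : Set (ι → ℕ)) :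
    Definable k (· ∈ A) ↔ Recognizable k A :=
  have := NeZero.of_gt hk
  ⟨recognizable_of_definable hk, definable_of_recognizable hk⟩

end Buchi

theorem stmt1 (k m : ℕ) (hk : 2 ≤ k) (A : Set (Fin m → ℕ)) :
    (∃ φ : LBA.Formula (Fin m), ∀ a : Fin m → ℕ,
        a ∈ A ↔ (letI := stdStructure k; φ.Realize a)) ↔
    (∃ (σ : Type) (_ : Fintype σ) (M : DFA (Fin m → Fin k) σ),
        M.accepts = {w : List (Fin m → Fin k) |
          (fun j => ∑ i : Fin w.length, (w.get i j : ℕ) * k ^ (i : ℕ)) ∈ A}) := by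
  have hA : {w : List (Fin m → Fin k) |
      (fun j => ∑ i : Fin w.length, (w.get i j : ℕ) * k ^ (i : ℕ)) ∈ A} =
      Buchi.expansions k A := by
    ext w
    simp only [Set.mem_ofPred_eq, Buchi.sum_digit_mul_pow_eq_wordValue]
    rfl
  rw [hA]
  exact Buchi.definable_iff_recognizable hk A
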